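/- Let (G,σ) be a signed graph, and let (G,σ′) be the signed graph obtained from (G,σ) by changing the sign of a single edge e (i.e., σ′(e) = −σ(e) and σ′ agrees with σ on all other edges). Then ψ(G,σ) − 2 ≤ ψ(G,σ′) ≤ ψ(G,σ) + 2. -/

import Mathlib

open SimpleGraph

/-- A signature on a graph: a symmetric assignment of signs (`1` or `-1`) to pairs of
vertices (only the values on edges are relevant). -/
def IsSignature {V : Type*} (σ : V → V → ℤ) : Prop :=
  (∀ u v, σ u v = σ v u) ∧ (∀ u v, σ u v = 1 ∨ σ u v = -1)

/-- `σ'` is obtained from `σ` by switching a set of vertices: every vertex gets a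
switching value `±1`, and the sign of an edge is multiplied by the values at its ends. -/
def SwitchEquiv {V : Type*} (σ σ' : V → V → ℤ) : Prop :=
  ∃ s : V → ℤ, (∀ v, s v = 1 ∨ s v = -1) ∧ ∀ u v, σ' u v = s u * s v * σ u v

/-- The colour set `M_k`, as a set of integers: `{±1, …, ±n}` if `k = 2n`, and
`{-n, …, -1, 0, 1, …, n}` if `k = 2n+1` (colour `±0` is represented by `0`). -/
def colourSet (k : ℕ) : Set ℤ :=
  if Even k then {i | i ≠ 0 ∧ i.natAbs ≤ k / 2} else {i | i.natAbs ≤ k / 2}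

/-- A proper `k`-colouring of the signed graph `(G, σ)`: colours come from `M_k` and,
for each edge `uv`, `φ u ≠ σ(uv) · φ v`. -/
def IsProperColouring {V : Type*} (G : SimpleGraph V) (σ : V → V → ℤ) (k : ℕ)
    (φ : V → ℤ) : Prop :=
  (∀ v, φ v ∈ colourSet k) ∧ ∀ u v, G.Adj u v → φ u ≠ σ u v * φ v

/-- The sign of an integer for the purpose of switching: `-1` for negative colours,
`1` otherwise. -/
def isgn (x : ℤ) : ℤ := if x < 0 then -1 else 1

/-- The sign of the edge `uv` after switching every vertex whose colour is negative. -/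
def redSign {V : Type*} (σ : V → V → ℤ) (φ : V → ℤ) (u v : V) : ℤ :=
  isgn (φ u) * isgn (φ v) * σ u v

/-- After switching all negatively-coloured vertices and taking absolute values of
colours, there is an edge of `(G, σ)` whose ends get values `i` and `j` and whose
resulting sign is `s`. -/
def HasEdgeType {V : Type*} (G : SimpleGraph V) (σ : V → V → ℤ) (φ : V → ℤ)
    (i j : ℕ) (s : ℤ) : Prop :=
  ∃ u v, G.Adj u v ∧ (φ u).natAbs = i ∧ (φ v).natAbs = j ∧ redSign σ φ u v = s

/-- A complete `k`-colouring of the signed graph `(G, σ)`. -/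
def IsCompleteColouring {V : Type*} (G : SimpleGraph V) (σ : V → V → ℤ) (k : ℕ)
    (φ : V → ℤ) : Prop :=
  IsProperColouring G σ k φ ∧
  (∀ i j : ℕ, (i : ℤ) ∈ colourSet k → (j : ℤ) ∈ colourSet k → i ≠ j →
    HasEdgeType G σ φ i j 1 ∧ HasEdgeType G σ φ i j (-1)) ∧
  (∀ i : ℕ, 1 ≤ i → (i : ℤ) ∈ colourSet k → HasEdgeType G σ φ i i (-1))

/-- Some signed graph equivalent to `(G, σ)` admits a complete `k`-colouring. -/
def AdmitsComplete {V : Type*} (G : SimpleGraph V) (σ : V → V → ℤ) (k : ℕ) : Prop :=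
  ∃ σ', IsSignature σ' ∧ SwitchEquiv σ σ' ∧ ∃ φ, IsCompleteColouring G σ' k φ

/-- The achromatic number of the signed graph `(G, σ)`: the largest `k` such that some
signed graph equivalent to `(G, σ)` admits a complete `k`-colouring. -/
noncomputable def psi {V : Type*} (G : SimpleGraph V) (σ : V → V → ℤ) : ℕ :=
  sSup {k | AdmitsComplete G σ k}

/-- The chromatic number of the signed graph `(G, σ)`: the smallest `k` such that
`(G, σ)` admits a proper `k`-colouring. -/
noncomputable def chi {V : Type*} (G : SimpleGraph V) (σ : V → V → ℤ) : ℕ :=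
  sInf {k | ∃ φ, IsProperColouring G σ k φ}

/-!
After switching every negatively coloured vertex, a complete colouring uses only nonnegative
colours, and giving a vertex a negative colour amounts to switching it.

Flip the edge `ab` in such a complete `k`-colouring. If `a` and `b` have different colours
`x ≠ y`, the colouring stays proper and only the pair `{x, y}` may lose one of its two signs.
If both have colour `x`, then `ab` becomes a positive edge inside class `x`. It is repaired by
switching the component of `b` in class `x` minus `ab`, or by moving an end of `ab` to another
colour, unless both ends see every other colour along edges of both signs; then `b` (together
with class `0` when `k` is odd) becomes a new colour class, and the colouring is complete with
one colour more. In the remaining cases all pairs of colours avoiding one nonzero colour `x`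
are complete. If a pair `{x, z}` lacks a sign, all `x`–`z` edges have the same sign, so class
`x` (class `0` when `z = 0`) can be switched and merged into the other class, at a cost of at
most two colours.
-/

section Switching

variable {V : Type*}

theorem SwitchEquiv.trans {σ τ ρ : V → V → ℤ} (h₁ : SwitchEquiv σ τ) (h₂ : SwitchEquiv τ ρ) :
    SwitchEquiv σ ρ := by
  obtain ⟨s, hs, hτ⟩ := h₁
  obtain ⟨t, ht, hρ⟩ := h₂
  refine ⟨fun v => t v * s v, fun v => ?_, fun u v => by rw [hρ, hτ]; ring⟩
  rcases hs v with h | h <;> rcases ht v with h' | h' <;> simp [h, h']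

theorem AdmitsComplete.of_switchEquiv {G : SimpleGraph V} {σ τ : V → V → ℤ} {k : ℕ}
    (hστ : SwitchEquiv σ τ) (h : AdmitsComplete G τ k) : AdmitsComplete G σ k := by
  obtain ⟨ρ, hρ, hτρ, hφ⟩ := h
  exact ⟨ρ, hρ, hστ.trans hτρ, hφ⟩

theorem SwitchEquiv.exists_flip {σ σ' τ : V → V → ℤ} {a b : V} (h : SwitchEquiv σ τ)
    (hσ' : IsSignature σ') (hflip : σ' a b = -σ a b)
    (hsame : ∀ u v, s(u, v) ≠ s(a, b) → σ' u v = σ u v) :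
    ∃ τ', IsSignature τ' ∧ SwitchEquiv σ' τ' ∧ τ' a b = -τ a b ∧
      ∀ u v, s(u, v) ≠ s(a, b) → τ' u v = τ u v := by
  obtain ⟨s, hs, hτ⟩ := h
  refine ⟨fun u v => s u * s v * σ' u v, ⟨fun u v => ?_, fun u v => ?_⟩, ⟨s, hs, fun _ _ => rfl⟩,
    by beta_reduce; rw [hτ, hflip]; ring, fun u v huv => by beta_reduce; rw [hτ, hsame u v huv]⟩
  · beta_reduce; rw [hσ'.1]; ring
  · rcases hs u with h₁ | h₁ <;> rcases hs v with h₂ | h₂ <;> rcases hσ'.2 u v with h₃ | h₃ <;>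
      simp [h₁, h₂, h₃]

open Classical in
noncomputable def switchAt (S : Set V) (τ : V → V → ℤ) (u v : V) : ℤ :=
  if (u ∈ S ↔ v ∈ S) then τ u v else -τ u v

variable {S : Set V} {τ : V → V → ℤ} {u v : V}

theorem switchAt_of_iff (h : u ∈ S ↔ v ∈ S) : switchAt S τ u v = τ u v := by
  simp [switchAt, h]

theorem switchAt_of_not_iff (h : ¬(u ∈ S ↔ v ∈ S)) : switchAt S τ u v = -τ u v := by
  simp only [switchAt, h, if_false]

theorem switchAt_of_not_mem (hu : u ∉ S) (hv : v ∉ S) : switchAt S τ u v = τ u v :=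
  switchAt_of_iff (iff_of_false hu hv)

theorem switchEquiv_switchAt (S : Set V) (τ : V → V → ℤ) : SwitchEquiv τ (switchAt S τ) := by
  classical
  refine ⟨fun v => if v ∈ S then -1 else 1, fun v => by by_cases hv : v ∈ S <;> simp [hv],
    fun u v => ?_⟩
  by_cases hu : u ∈ S <;> by_cases hv : v ∈ S <;> simp [switchAt, hu, hv]

theorem IsSignature.switchAt (hτ : IsSignature τ) (S : Set V) : IsSignature (switchAt S τ) := by
  refine ⟨fun u v => ?_, fun u v => ?_⟩
  · by_cases h : u ∈ S ↔ v ∈ S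
    · rw [switchAt_of_iff h, switchAt_of_iff h.symm, hτ.1]
    · rw [switchAt_of_not_iff h, switchAt_of_not_iff (mt Iff.symm h), hτ.1]
  · by_cases h : u ∈ S ↔ v ∈ S
    · rw [switchAt_of_iff h]; exact hτ.2 u v
    · rw [switchAt_of_not_iff h]; rcases hτ.2 u v with h' | h' <;> simp [h']

end Switching

section NatColouring

def IsColourValue (k i : ℕ) : Prop := i ≤ k / 2 ∧ (Even k → i ≠ 0)

theorem isColourValue_iff {k i : ℕ} : IsColourValue k i ↔ i ≤ k / 2 ∧ (k % 2 = 0 → i ≠ 0) := by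
  simp [IsColourValue, Nat.even_iff]

theorem mem_colourSet_iff_natAbs {k : ℕ} {z : ℤ} :
    z ∈ colourSet k ↔ IsColourValue k z.natAbs := by
  unfold colourSet IsColourValue
  split_ifs with hk
  · simp [hk, and_comm]
  · simp [hk]

theorem natCast_mem_colourSet {k i : ℕ} : (i : ℤ) ∈ colourSet k ↔ IsColourValue k i := by
  rw [mem_colourSet_iff_natAbs, Int.natAbs_natCast]

variable {V : Type*} (G : SimpleGraph V) (τ : V → V → ℤ) (f : V → ℕ)

def IsProperNat : Prop := ∀ u v, G.Adj u v → f u = f v → τ u v = -1 ∧ f u ≠ 0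

def HasEdge (i j : ℕ) (s : ℤ) : Prop := ∃ u v, G.Adj u v ∧ f u = i ∧ f v = j ∧ τ u v = s

def Covered (i j : ℕ) : Prop := ∀ s : ℤ, (s = 1 ∨ s = -1) → HasEdge G τ f i j s

structure IsCompleteNat (k : ℕ) : Prop where
  colour : ∀ v, IsColourValue k (f v)
  proper : IsProperNat G τ f
  covered : ∀ i j, IsColourValue k i → IsColourValue k j → i ≠ j → Covered G τ f i j
  diag : ∀ i, 1 ≤ i → IsColourValue k i → HasEdge G τ f i i (-1)

variable {G τ f}

theorem HasEdge.symm (hτ : IsSignature τ) {i j : ℕ} {s : ℤ} (h : HasEdge G τ f i j s) :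
    HasEdge G τ f j i s := by
  obtain ⟨u, v, huv, hu, hv, hs⟩ := h
  exact ⟨v, u, huv.symm, hv, hu, by rw [hτ.1, hs]⟩

theorem Covered.symm (hτ : IsSignature τ) {i j : ℕ} (h : Covered G τ f i j) :
    Covered G τ f j i :=
  fun s hs => (h s hs).symm hτ

theorem not_covered_iff {i j : ℕ} :
    ¬Covered G τ f i j ↔ ∃ s : ℤ, (s = 1 ∨ s = -1) ∧ ¬HasEdge G τ f i j s := by
  simp only [Covered, not_forall, exists_prop]

theorem neg_of_not_hasEdge (hτ : IsSignature τ) {i j : ℕ} {s : ℤ} (hs : s = 1 ∨ s = -1)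
    (h : ¬HasEdge G τ f i j s) {u v : V} (huv : G.Adj u v) (hu : f u = i) (hv : f v = j) :
    τ u v = -s := by
  have : τ u v ≠ s := fun he => h ⟨u, v, huv, hu, hv, he⟩
  rcases hτ.2 u v with h' | h' <;> omega

theorem HasEdge.of_agree {τ₂ : V → V → ℤ} {f₂ : V → ℕ} {P : ℕ → Prop} {i j : ℕ} {s : ℤ}
    (h : HasEdge G τ f i j s) (hi : P i) (hj : P j) (hf : ∀ v, P (f v) → f₂ v = f v)
    (hτ : ∀ u v, P (f u) → P (f v) → τ₂ u v = τ u v) : HasEdge G τ₂ f₂ i j s := by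
  obtain ⟨u, v, huv, rfl, rfl, rfl⟩ := h
  exact ⟨u, v, huv, hf u hi, hf v hj, hτ u v hi hj⟩

theorem Covered.of_agree {τ₂ : V → V → ℤ} {f₂ : V → ℕ} {P : ℕ → Prop} {i j : ℕ}
    (h : Covered G τ f i j) (hi : P i) (hj : P j) (hf : ∀ v, P (f v) → f₂ v = f v)
    (hτ : ∀ u v, P (f u) → P (f v) → τ₂ u v = τ u v) : Covered G τ₂ f₂ i j :=
  fun s hs => (h s hs).of_agree hi hj hf hτ

theorem HasEdge.comp {i j : ℕ} {s : ℤ} (h : HasEdge G τ f i j s) (g : ℕ → ℕ) :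
    HasEdge G τ (g ∘ f) (g i) (g j) s := by
  obtain ⟨u, v, huv, rfl, rfl, hs⟩ := h
  exact ⟨u, v, huv, rfl, rfl, hs⟩

theorem Covered.comp {i j : ℕ} (h : Covered G τ f i j) (g : ℕ → ℕ) :
    Covered G τ (g ∘ f) (g i) (g j) :=
  fun s hs => (h s hs).comp g

theorem IsProperNat.comp (hf : IsProperNat G τ f) {g : ℕ → ℕ} (hg : Function.Injective g)
    (hg0 : g 0 = 0) : IsProperNat G τ (g ∘ f) := by
  intro u v huv he
  obtain ⟨hneg, hne⟩ := hf u v huv (hg he)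
  exact ⟨hneg, fun h => hne (hg (h.trans hg0.symm))⟩

theorem forall_rel_of_forall_ne {α : Type*} {r : α → α → Prop} (hr : ∀ i j, r i j → r j i)
    {P : α → Prop} (x : α) (hx : ∀ z, P z → z ≠ x → r x z)
    (hne : ∀ i j, P i → P j → i ≠ j → i ≠ x → j ≠ x → r i j) :
    ∀ i j, P i → P j → i ≠ j → r i j := by
  intro i j hi hj hij
  by_cases hix : i = x
  · exact hix ▸ hx j hj (hix ▸ hij).symm
  by_cases hjx : j = x
  · exact hr _ _ (hjx ▸ hx i hi hix)
  exact hne i j hi hj hij hix hjx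

theorem forall_rel_of_forall_ne₂ {α : Type*} {r : α → α → Prop} (hr : ∀ i j, r i j → r j i)
    {P : α → Prop} {t x : α} (htx : r t x) (ht : ∀ z, P z → z ≠ t → z ≠ x → r t z)
    (hx : ∀ z, P z → z ≠ t → z ≠ x → r x z)
    (hne : ∀ i j, P i → P j → i ≠ j → i ≠ t → j ≠ t → i ≠ x → j ≠ x → r i j) :
    ∀ i j, P i → P j → i ≠ j → r i j := by
  refine forall_rel_of_forall_ne hr t (fun z hz hzt => ?_) fun i j hi hj hij hit hjt => ?_
  · by_cases hzx : z = x
    exacts [hzx ▸ htx, ht z hz hzt hzx]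
  · exact forall_rel_of_forall_ne (P := fun i => P i ∧ i ≠ t) hr x
      (fun z hz hzx => hx z hz.1 hz.2 hzx)
      (fun i j hi hj hij hix hjx => hne i j hi.1 hj.1 hij hi.2 hj.2 hix hjx)
      i j ⟨hi, hit⟩ ⟨hj, hjt⟩ hij

end NatColouring

section Normalisation

variable {V : Type*} {G : SimpleGraph V} {σ τ : V → V → ℤ} {k : ℕ}

theorem isgn_cases (z : ℤ) : isgn z = 1 ∨ isgn z = -1 := by
  unfold isgn; split_ifs <;> simp

theorem isgn_of_nonneg {z : ℤ} (hz : 0 ≤ z) : isgn z = 1 := by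
  unfold isgn; rw [if_neg (not_lt.2 hz)]

theorem isgn_mul_isgn_mul_eq_neg_one {x y t : ℤ} (ht : t = 1 ∨ t = -1) (hxy : x ≠ t * y)
    (habs : x.natAbs = y.natAbs) : isgn x * isgn y * t = -1 ∧ x ≠ 0 := by
  unfold isgn; rcases ht with rfl | rfl <;> split_ifs <;> omega

theorem IsSignature.redSign (hσ : IsSignature σ) (φ : V → ℤ) : IsSignature (redSign σ φ) := by
  refine ⟨fun u v => by simp only [_root_.redSign, hσ.1 u v]; ring, fun u v => ?_⟩
  unfold _root_.redSign
  rcases isgn_cases (φ u) with h | h <;> rcases isgn_cases (φ v) with h' | h' <;>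
    rcases hσ.2 u v with h'' | h'' <;> simp [h, h', h'']

theorem switchEquiv_redSign (σ : V → V → ℤ) (φ : V → ℤ) : SwitchEquiv σ (redSign σ φ) :=
  ⟨fun v => isgn (φ v), fun v => isgn_cases (φ v), fun _ _ => rfl⟩

theorem IsCompleteColouring.isCompleteNat {φ : V → ℤ} (hσ : IsSignature σ)
    (h : IsCompleteColouring G σ k φ) :
    IsCompleteNat G (redSign σ φ) (fun v => (φ v).natAbs) k := by
  obtain ⟨⟨hcol, hprop⟩, hpair, hdiag⟩ := h
  refine ⟨fun v => mem_colourSet_iff_natAbs.1 (hcol v), fun u v huv he => ?_,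
    fun i j hi hj hij => ?_, fun i hi1 hi => hdiag i hi1 (natCast_mem_colourSet.2 hi)⟩
  · obtain ⟨hneg, hne⟩ := isgn_mul_isgn_mul_eq_neg_one (hσ.2 u v) (hprop u v huv) he
    exact ⟨hneg, Int.natAbs_ne_zero.2 hne⟩
  · obtain ⟨h₁, h₂⟩ := hpair i j (natCast_mem_colourSet.2 hi) (natCast_mem_colourSet.2 hj) hij
    rintro s (rfl | rfl)
    exacts [h₁, h₂]

theorem AdmitsComplete.exists_isCompleteNat (h : AdmitsComplete G σ k) :
    ∃ τ, IsSignature τ ∧ SwitchEquiv σ τ ∧ ∃ f, IsCompleteNat G τ f k := by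
  obtain ⟨σ₁, hσ₁, hσσ₁, φ, hφ⟩ := h
  exact ⟨_, hσ₁.redSign φ, hσσ₁.trans (switchEquiv_redSign σ₁ φ), _, hφ.isCompleteNat hσ₁⟩

theorem hasEdgeType_natCast {f : V → ℕ} {i j : ℕ} {s : ℤ} :
    HasEdgeType G τ (fun v => (f v : ℤ)) i j s ↔ HasEdge G τ f i j s := by
  simp only [HasEdgeType, HasEdge, redSign, isgn_of_nonneg (Int.natCast_nonneg _),
    Int.natAbs_natCast, one_mul]

theorem IsCompleteNat.admitsComplete {f : V → ℕ} (hτ : IsSignature τ)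
    (h : IsCompleteNat G τ f k) : AdmitsComplete G τ k := by
  refine ⟨τ, hτ, ⟨fun _ => 1, fun _ => Or.inl rfl, fun u v => by ring⟩, fun v => (f v : ℤ),
    ⟨fun v => natCast_mem_colourSet.2 (h.colour v), fun u v huv he => ?_⟩,
    fun i j hi hj hij => ?_, fun i hi1 hi => ?_⟩
  · beta_reduce at he
    by_cases hfe : f u = f v
    · obtain ⟨hneg, hne⟩ := h.proper u v huv hfe
      rw [hneg] at he; omega
    · rcases hτ.2 u v with h' | h' <;> rw [h'] at he <;> omega
  · rw [natCast_mem_colourSet] at hi hj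
    simp only [hasEdgeType_natCast]
    exact ⟨h.covered i j hi hj hij 1 (Or.inl rfl), h.covered i j hi hj hij (-1) (Or.inr rfl)⟩
  · exact hasEdgeType_natCast.2 (h.diag i hi1 (natCast_mem_colourSet.1 hi))

theorem AdmitsComplete.le_two_mul_card_add_one [Fintype V] (h : AdmitsComplete G σ k) :
    k ≤ 2 * Fintype.card V + 1 := by
  classical
  obtain ⟨τ, -, -, f, hf⟩ := h.exists_isCompleteNat
  have hsub : Finset.Icc 1 (k / 2) ⊆ Finset.univ.image f := by
    intro i hi
    rw [Finset.mem_Icc] at hi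
    obtain ⟨u, -, -, hu, -⟩ := hf.diag i hi.1 ⟨hi.2, fun _ => by omega⟩
    exact Finset.mem_image.2 ⟨u, Finset.mem_univ _, hu⟩
  have := (Finset.card_le_card hsub).trans Finset.card_image_le
  rw [Nat.card_Icc, Finset.card_univ] at this
  omega

end Normalisation

section Merging

variable {V : Type*} {G : SimpleGraph V} {τ : V → V → ℤ} {f : V → ℕ} {k x : ℕ}

theorem isProperNat_of_recolour {τ₂ : V → V → ℤ} {f₂ : V → ℕ} (hτ₂ : ∀ u v, τ₂ u v = τ₂ v u)
    {T : Set V} {t : ℕ}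
    (hout : ∀ u v, G.Adj u v → u ∉ T → v ∉ T → f u = f v → τ u v = -1 ∧ f u ≠ 0)
    (hf : ∀ v ∉ T, f₂ v = f v) (hτ : ∀ u v, u ∉ T → v ∉ T → τ₂ u v = τ u v)
    (hT : ∀ v ∈ T, f₂ v = t)
    (hnew : ∀ u v, G.Adj u v → u ∈ T → f₂ v = t → τ₂ u v = -1 ∧ t ≠ 0) :
    IsProperNat G τ₂ f₂ := by
  intro u v huv he
  by_cases hu : u ∈ T
  · rw [hT u hu] at he ⊢
    exact hnew u v huv hu he.symm
  by_cases hv : v ∈ T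
  · rw [hT v hv] at he
    rw [he, hτ₂]
    exact hnew v u huv.symm hv he
  rw [hf u hu, hf v hv] at he
  rw [hf u hu, hτ u v hu hv]
  exact hout u v huv hu hv he

/-- Class `p` is merged into class `q`; when all `p`–`q` edges are positive, class `p` is
switched first so that they become negative. -/
theorem exists_merge (hτ : IsSignature τ) (hf : IsProperNat G τ f) {p q : ℕ} (hq : q ≠ 0)
    {c : ℤ} (hc : c = 1 ∨ c = -1) (huni : ∀ u v, G.Adj u v → f u = p → f v = q → τ u v = c) :
    ∃ τ₂, IsSignature τ₂ ∧ SwitchEquiv τ τ₂ ∧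
      IsProperNat G τ₂ (fun v => if f v = p then q else f v) ∧
      ∀ u v, f u ≠ p → f v ≠ p → τ₂ u v = τ u v := by
  set S : Set V := {v | f v = p ∧ c = 1}
  have hS : ∀ w, f w ≠ p → w ∉ S := fun w hw hS => hw hS.1
  refine ⟨switchAt S τ, hτ.switchAt S, switchEquiv_switchAt S τ,
    isProperNat_of_recolour (hτ.switchAt S).1 (T := {v | f v = p}) (t := q)
      (fun u v huv _ _ => hf u v huv) (fun v hv => if_neg hv)
      (fun u v hu hv => switchAt_of_not_mem (hS u hu) (hS v hv)) (fun v hv => if_pos hv)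
      fun u v huv hu hv => ⟨?_, hq⟩,
    fun u v hu hv => switchAt_of_not_mem (hS u hu) (hS v hv)⟩
  replace hu : f u = p := hu
  by_cases hvp : f v = p
  · rw [switchAt_of_iff (by simp [S, hu, hvp])]
    exact (hf u v huv (hu.trans hvp.symm)).1
  · simp only [hvp, if_false] at hv
    rcases hc with rfl | rfl
    · rw [switchAt_of_not_iff (by simp [S, hu, hvp]), huni u v huv hu hv]
    · rw [switchAt_of_not_mem (by simp [S]) (by simp [S]), huni u v huv hu hv]

structure IsCompleteAwayFrom (G : SimpleGraph V) (τ : V → V → ℤ) (f : V → ℕ) (k x : ℕ) :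
    Prop where
  colour : ∀ v, IsColourValue k (f v)
  proper : IsProperNat G τ f
  covered : ∀ i j, IsColourValue k i → IsColourValue k j → i ≠ j → i ≠ x → j ≠ x →
    Covered G τ f i j
  diag : ∀ i, 1 ≤ i → IsColourValue k i → HasEdge G τ f i i (-1)

theorem IsCompleteAwayFrom.isCompleteNat (hτ : IsSignature τ) (h : IsCompleteAwayFrom G τ f k x)
    (hx : ∀ z, IsColourValue k z → z ≠ x → Covered G τ f x z) : IsCompleteNat G τ f k :=
  ⟨h.colour, h.proper, forall_rel_of_forall_ne (fun _ _ hij => hij.symm hτ) x hx h.covered,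
    h.diag⟩

theorem IsCompleteAwayFrom.admitsComplete_sub_one (hτ : IsSignature τ)
    (h : IsCompleteAwayFrom G τ f k x) (hx : 1 ≤ x) (hxk : x ≤ k / 2) (hk : ¬Even k)
    (hcov : ∀ z, 1 ≤ z → z ≤ k / 2 → z ≠ x → Covered G τ f x z) {s : ℤ} (hs : s = 1 ∨ s = -1)
    (hmiss : ¬HasEdge G τ f x 0 s) : AdmitsComplete G τ (k - 1) := by
  obtain ⟨τ₂, hτ₂, hττ₂, hprop, hagree⟩ := exists_merge (p := 0) hτ h.proper
    (Nat.one_le_iff_ne_zero.1 hx) (c := -s) (by omega)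
    (fun u v huv hu hv => by rw [hτ.1]; exact neg_of_not_hasEdge hτ hs hmiss huv.symm hv hu)
  have hf : ∀ v, f v ≠ 0 → (if f v = 0 then x else f v) = f v := fun v hv => if_neg hv
  rw [Nat.even_iff] at hk
  have hval : ∀ i, IsColourValue (k - 1) i → 1 ≤ i ∧ IsColourValue k i := by
    intro i hi
    rw [isColourValue_iff] at hi ⊢
    omega
  refine ((IsCompleteAwayFrom.isCompleteNat (x := x) hτ₂ ⟨fun v => ?_, hprop,
    fun i j hi hj hij hix hjx => ?_, fun i hi1 hi => ?_⟩ fun z hz hzx => ?_).admitsComplete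
    hτ₂).of_switchEquiv hττ₂
  · have := h.colour v
    rw [isColourValue_iff] at this ⊢
    split_ifs <;> omega
  · obtain ⟨hi1, hi⟩ := hval i hi
    obtain ⟨hj1, hj⟩ := hval j hj
    exact (h.covered i j hi hj hij hix hjx).of_agree (P := (· ≠ 0)) (by omega) (by omega) hf
      hagree
  · exact (h.diag i hi1 (hval i hi).2).of_agree (P := (· ≠ 0)) (by omega) (by omega) hf hagree
  · obtain ⟨hz1, hz⟩ := hval z hz
    exact (hcov z hz1 hz.1 hzx).of_agree (P := (· ≠ 0)) (by omega) (by omega) hf hagree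

/-- After class `x` is merged into class `z`, the top colour `k / 2` is renamed `x`. -/
theorem IsCompleteAwayFrom.admitsComplete_sub_two (hτ : IsSignature τ)
    (h : IsCompleteAwayFrom G τ f k x) (hx : 1 ≤ x) (hxk : x ≤ k / 2) {z : ℕ} (hz : 1 ≤ z)
    (hzk : z ≤ k / 2) (hzx : z ≠ x) {s : ℤ} (hs : s = 1 ∨ s = -1)
    (hmiss : ¬HasEdge G τ f x z s) : AdmitsComplete G τ (k - 2) := by
  obtain ⟨τ₂, hτ₂, hττ₂, hprop, hagree⟩ := exists_merge (p := x) hτ h.proper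
    (Nat.one_le_iff_ne_zero.1 hz) (c := -s) (by omega)
    (fun u v huv hu hv => neg_of_not_hasEdge hτ hs hmiss huv hu hv)
  set f₂ : V → ℕ := fun v => if f v = x then z else f v
  have hf : ∀ v, f v ≠ x → f₂ v = f v := fun v hv => if_neg hv
  set g := Equiv.swap x (k / 2)
  have hg : ∀ i, g i = if i = x then k / 2 else if i = k / 2 then x else i :=
    fun i => Equiv.swap_apply_def x (k / 2) i
  have hgg : ∀ i, g (g i) = i := Equiv.swap_apply_self x (k / 2)
  have hpre : ∀ i, IsColourValue (k - 2) i →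
      g i ≠ x ∧ IsColourValue k (g i) ∧ (1 ≤ i → 1 ≤ g i) := by
    intro i hi
    rw [isColourValue_iff] at hi ⊢
    rw [hg]
    split_ifs <;> omega
  refine (IsCompleteNat.admitsComplete hτ₂ ⟨fun v => ?_, hprop.comp g.injective ?_,
    fun i j hi hj hij => ?_, fun i hi1 hi => ?_⟩).of_switchEquiv hττ₂
  · have := h.colour v
    rw [isColourValue_iff] at this ⊢
    simp only [Function.comp, hg, f₂]
    split_ifs <;> omega
  · rw [hg]; split_ifs <;> omega
  · obtain ⟨hix, hiv, -⟩ := hpre i hi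
    obtain ⟨hjx, hjv, -⟩ := hpre j hj
    have := ((h.covered _ _ hiv hjv (g.injective.ne hij) hix hjx).of_agree (P := (· ≠ x)) hix
      hjx hf hagree).comp g
    rwa [hgg, hgg] at this
  · obtain ⟨hix, hiv, hi1'⟩ := hpre i hi
    have := ((h.diag _ (hi1' hi1) hiv).of_agree (P := (· ≠ x)) hix hix hf hagree).comp g
    rwa [hgg] at this

theorem IsCompleteAwayFrom.exists_admitsComplete (hτ : IsSignature τ)
    (h : IsCompleteAwayFrom G τ f k x) (hx : 1 ≤ x) (hxk : x ≤ k / 2) :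
    ∃ j, k ≤ j + 2 ∧ AdmitsComplete G τ j := by
  by_cases hnz : ∀ z, 1 ≤ z → z ≤ k / 2 → z ≠ x → Covered G τ f x z
  · by_cases h0 : ¬Even k → Covered G τ f x 0
    · refine ⟨k, by omega, (h.isCompleteNat hτ fun z hz hzx => ?_).admitsComplete hτ⟩
      rcases Nat.eq_zero_or_pos z with rfl | hz1
      · exact h0 fun he => hz.2 he rfl
      · exact hnz z hz1 hz.1 hzx
    · obtain ⟨hodd, hmiss⟩ := Classical.not_imp.1 h0
      obtain ⟨s, hs, hmiss⟩ := not_covered_iff.1 hmiss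
      exact ⟨k - 1, by omega, h.admitsComplete_sub_one hτ hx hxk hodd hnz hs hmiss⟩
  · push Not at hnz
    obtain ⟨z, hz1, hzk, hzx, hmiss⟩ := hnz
    obtain ⟨s, hs, hmiss⟩ := not_covered_iff.1 hmiss
    exact ⟨k - 2, by omega, h.admitsComplete_sub_two hτ hx hxk hz1 hzk hzx hs hmiss⟩

end Merging

section Defect

variable {V : Type*} {G : SimpleGraph V} {τ : V → V → ℤ} {f : V → ℕ} {k x : ℕ} {a b : V}

/-- The situation after flipping a negative edge `ab` inside colour class `x` of a complete
colouring: `ab` is now positive, and it may have been the only negative `x`–`x` edge. -/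
structure IsDefectiveAt (G : SimpleGraph V) (τ : V → V → ℤ) (f : V → ℕ) (k x : ℕ) (a b : V) :
    Prop where
  adj : G.Adj a b
  sign : τ a b = 1
  left : f a = x
  right : f b = x
  one_le : 1 ≤ x
  colour : ∀ v, IsColourValue k (f v)
  proper : IsProperNat (G.deleteEdges {s(a, b)}) τ f
  covered : ∀ i j, IsColourValue k i → IsColourValue k j → i ≠ j → Covered G τ f i j
  diag : ∀ i, 1 ≤ i → IsColourValue k i → i ≠ x → HasEdge G τ f i i (-1)

theorem IsDefectiveAt.symm (hτ : IsSignature τ) (h : IsDefectiveAt G τ f k x a b) :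
    IsDefectiveAt G τ f k x b a :=
  { h with
    adj := h.adj.symm
    sign := by rw [hτ.1]; exact h.sign
    left := h.right
    right := h.left
    proper := by rw [Sym2.eq_swap]; exact h.proper }

theorem IsDefectiveAt.proper_of_ne (h : IsDefectiveAt G τ f k x a b) {u v : V} (huv : G.Adj u v)
    (hu : u ≠ b) (hv : v ≠ b) (he : f u = f v) : τ u v = -1 ∧ f u ≠ 0 :=
  h.proper u v (deleteEdges_adj.2 ⟨huv, by simp [hu, hv]⟩) he

theorem IsDefectiveAt.neg_of_adj (h : IsDefectiveAt G τ f k x a b) {a₁ : V} (ha₁ : G.Adj a a₁)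
    (hfa₁ : f a₁ = x) (ha₁b : a₁ ≠ b) : τ a a₁ = -1 :=
  (h.proper_of_ne ha₁ (G.ne_of_adj h.adj) ha₁b (h.left.trans hfa₁.symm)).1

theorem IsDefectiveAt.ne_right_of_ne (h : IsDefectiveAt G τ f k x a b) {v : V} (hv : f v ≠ x) :
    v ≠ b :=
  fun hvb => hv (hvb ▸ h.right)

/-- Switching the component of `b` in class `x` minus the edge `ab` turns `ab` negative and keeps
the colouring proper, as long as that component does not contain `a`. -/
theorem IsDefectiveAt.exists_admitsComplete_of_not_reachable (hτ : IsSignature τ)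
    (h : IsDefectiveAt G τ f k x a b)
    (hba : ¬Relation.ReflTransGen
      (fun u v => (G.deleteEdges {s(a, b)}).Adj u v ∧ f u = x ∧ f v = x) b a) :
    ∃ j, k ≤ j + 2 ∧ AdmitsComplete G τ j := by
  set C : Set V := {v | Relation.ReflTransGen
    (fun u v => (G.deleteEdges {s(a, b)}).Adj u v ∧ f u = x ∧ f v = x) b v}
  have hCx : ∀ v ∈ C, f v = x := by
    intro v hv
    induction hv with
    | refl => exact h.right
    | tail _ hR _ => exact hR.2.2
  have hout : ∀ v, f v ≠ x → v ∉ C := fun v hv hC => hv (hCx v hC)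
  have hiff : ∀ u v, (G.deleteEdges {s(a, b)}).Adj u v → f u = f v → (u ∈ C ↔ v ∈ C) := by
    intro u v huv he
    by_cases hux : f u = x
    · exact ⟨fun hu => Relation.ReflTransGen.tail hu ⟨huv, hux, he ▸ hux⟩,
        fun hv => Relation.ReflTransGen.tail hv ⟨huv.symm, he ▸ hux, hux⟩⟩
    · exact iff_of_false (hout u hux) (hout v (he ▸ hux))
  have hab : switchAt C τ a b = -1 := by
    rw [switchAt_of_not_iff (show ¬(a ∈ C ↔ b ∈ C) from fun hC => hba (hC.2 .refl)), h.sign]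
  have hproper : IsProperNat G (switchAt C τ) f := by
    intro u v huv he
    by_cases hs : s(u, v) = s(a, b)
    · have hx := h.left ▸ h.one_le
      rcases Sym2.eq_iff.1 hs with ⟨rfl, rfl⟩ | ⟨rfl, rfl⟩
      · exact ⟨hab, by omega⟩
      · exact ⟨by rw [(hτ.switchAt C).1]; exact hab, by omega⟩
    · have huv' : (G.deleteEdges {s(a, b)}).Adj u v := deleteEdges_adj.2 ⟨huv, hs⟩
      rw [switchAt_of_iff (hiff u v huv' he)]
      exact h.proper u v huv' he
  have hagree : ∀ u v, f u ≠ x → f v ≠ x → switchAt C τ u v = τ u v := fun u v hu hv =>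
    switchAt_of_not_mem (hout u hu) (hout v hv)
  refine (IsCompleteAwayFrom.exists_admitsComplete (hτ.switchAt C)
    ⟨h.colour, hproper, fun i j hi hj hij hix hjx => ?_, fun i hi1 hi => ?_⟩ h.one_le
    (h.left ▸ (h.colour a).1)).imp fun j hj =>
      ⟨hj.1, hj.2.of_switchEquiv (switchEquiv_switchAt C τ)⟩
  · exact (h.covered i j hi hj hij).of_agree (P := (· ≠ x)) hix hjx (fun _ _ => rfl) hagree
  · by_cases hix : i = x
    · exact hix ▸ ⟨a, b, h.adj, h.left, h.right, hab⟩
    · exact (h.diag i hi1 hi hix).of_agree (P := (· ≠ x)) hix hix (fun _ _ => rfl) hagree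

/-- After being switched when `c = 1`, the vertex `v` can take the colour `m ≠ x`. -/
def HasFreeColour (G : SimpleGraph V) (τ : V → V → ℤ) (f : V → ℕ) (k x : ℕ) (v : V) : Prop :=
  ∃ m, IsColourValue k m ∧ m ≠ x ∧ ∃ c : ℤ, (c = 1 ∨ c = -1) ∧
    ∀ w, G.Adj v w → f w = m → m ≠ 0 ∧ τ v w = c

/-- Once `b` has moved to its free colour, the edge `aa₁` is a negative edge inside class `x`. -/
theorem IsDefectiveAt.exists_admitsComplete_of_hasFreeColour (hτ : IsSignature τ)
    (h : IsDefectiveAt G τ f k x a b) {a₁ : V} (ha₁ : G.Adj a a₁) (hfa₁ : f a₁ = x)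
    (ha₁b : a₁ ≠ b) (hb : HasFreeColour G τ f k x b) :
    ∃ j, k ≤ j + 2 ∧ AdmitsComplete G τ j := by
  classical
  obtain ⟨m, hm, hmx, c, hc, hbm⟩ := hb
  set S : Set V := {v | v = b ∧ c = 1}
  set f₂ := Function.update f b m
  have hS : ∀ v, v ≠ b → v ∉ S := fun v hv hS => hv hS.1
  have hf₂ : ∀ v, v ≠ b → f₂ v = f v := fun v hv => Function.update_of_ne hv _ _
  have hf₂b : f₂ b = m := Function.update_self b m f
  have hproper : IsProperNat G (switchAt S τ) f₂ := by
    refine isProperNat_of_recolour (hτ.switchAt S).1 (T := {b}) (t := m)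
      (fun u v huv hu hv => h.proper_of_ne huv hu hv) hf₂
      (fun u v hu hv => switchAt_of_not_mem (hS u hu) (hS v hv)) (fun v hv => hv ▸ hf₂b)
      fun u w hbw hu hw => ?_
    rw [Set.mem_singleton_iff.1 hu] at hbw ⊢
    have hwb : w ≠ b := (G.ne_of_adj hbw).symm
    obtain ⟨hm0, hτbw⟩ := hbm w hbw (hf₂ w hwb ▸ hw)
    refine ⟨?_, hm0⟩
    rcases hc with rfl | rfl
    · rw [switchAt_of_not_iff (by simp [S, hwb]), hτbw]
    · rw [switchAt_of_not_mem (by simp [S]) (by simp [S]), hτbw]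
  have hagree_f : ∀ v, f v ≠ x → f₂ v = f v := fun v hv => hf₂ v (h.ne_right_of_ne hv)
  have hagree_τ : ∀ u v, f u ≠ x → f v ≠ x → switchAt S τ u v = τ u v := fun u v hu hv =>
    switchAt_of_not_mem (hS u (h.ne_right_of_ne hu)) (hS v (h.ne_right_of_ne hv))
  have hab : a ≠ b := G.ne_of_adj h.adj
  refine (IsCompleteAwayFrom.exists_admitsComplete (hτ.switchAt S)
    ⟨fun v => ?_, hproper, fun i j hi hj hij hix hjx => ?_, fun i hi1 hi => ?_⟩ h.one_le
    (h.left ▸ (h.colour a).1)).imp fun j hj =>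
      ⟨hj.1, hj.2.of_switchEquiv (switchEquiv_switchAt S τ)⟩
  · by_cases hv : v = b
    · rw [hv, hf₂b]; exact hm
    · rw [hf₂ v hv]; exact h.colour v
  · exact (h.covered i j hi hj hij).of_agree (P := (· ≠ x)) hix hjx hagree_f hagree_τ
  · by_cases hix : i = x
    · refine ⟨a, a₁, ha₁, by rw [hf₂ a hab, h.left, hix], by rw [hf₂ a₁ ha₁b, hfa₁, hix], ?_⟩
      rw [switchAt_of_not_mem (hS a hab) (hS a₁ ha₁b)]
      exact h.neg_of_adj ha₁ hfa₁ ha₁b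
    · exact (h.diag i hi1 hi hix).of_agree (P := (· ≠ x)) hix hix hagree_f hagree_τ

def SeesBothSigns (G : SimpleGraph V) (τ : V → V → ℤ) (f : V → ℕ) (k x : ℕ) (v : V) : Prop :=
  ∀ m, 1 ≤ m → m ≤ k / 2 → m ≠ x → ∀ s : ℤ, (s = 1 ∨ s = -1) →
    ∃ w, G.Adj v w ∧ f w = m ∧ τ v w = s

theorem SeesBothSigns.covered {v : V} (hv : SeesBothSigns G τ f k x v) {τ₂ : V → V → ℤ}
    {f₂ : V → ℕ} {m : ℕ} (hm : 1 ≤ m) (hmk : m ≤ k / 2) (hmx : m ≠ x)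
    (hagree : ∀ w, G.Adj v w → f w = m → f₂ w = m ∧ τ₂ v w = τ v w) :
    Covered G τ₂ f₂ (f₂ v) m := by
  intro s hs
  obtain ⟨w, hvw, hw, hs'⟩ := hv m hm hmk hmx s hs
  obtain ⟨hf₂w, hτ₂⟩ := hagree w hvw hw
  exact ⟨v, w, hvw, rfl, hf₂w, hτ₂ ▸ hs'⟩

theorem seesBothSigns_of_not_hasFreeColour (hτ : IsSignature τ) {v : V}
    (hv : ¬HasFreeColour G τ f k x v) : SeesBothSigns G τ f k x v := by
  intro m hm1 hmk hmx s hs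
  by_contra hno
  refine hv ⟨m, ⟨hmk, fun _ => by omega⟩, hmx, -s, by omega, fun w hvw hw => ⟨by omega, ?_⟩⟩
  have : τ v w ≠ s := fun he => hno ⟨w, hvw, hw, he⟩
  rcases hτ.2 v w with h' | h' <;> omega

theorem exists_adj_zero_of_not_hasFreeColour (hk : ¬Even k) (hx : x ≠ 0) {v : V}
    (hv : ¬HasFreeColour G τ f k x v) : ∃ w, G.Adj v w ∧ f w = 0 := by
  by_contra hno
  push Not at hno
  exact hv ⟨0, ⟨Nat.zero_le _, fun he => absurd he hk⟩, hx.symm, -1, Or.inr rfl,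
    fun w hvw hw => absurd hw (hno w hvw)⟩

/-- `b` takes a new colour `t`: the pairs `{t, x}`, `{t, z}`, `{x, z}` and the class `x` are
supplied by the edges `ba`, `bp`, `aa₁` and by the neighbours of `a` and `b`. -/
theorem IsDefectiveAt.isCompleteNat_of_recolour (hτ : IsSignature τ)
    (h : IsDefectiveAt G τ f k x a b) {a₁ : V} (ha₁ : G.Adj a a₁) (hfa₁ : f a₁ = x)
    (ha₁b : a₁ ≠ b) {p : V} (hp : G.Adj b p) (hfp : f p = x) (hpa : p ≠ a)
    (ha : SeesBothSigns G τ f k x a) (hb : SeesBothSigns G τ f k x b)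
    {τ₂ : V → V → ℤ} (hτ₂ : IsSignature τ₂) {f₂ : V → ℕ} {j t : ℕ}
    (hproper : IsProperNat G τ₂ f₂) (hcolour : ∀ v, IsColourValue j (f₂ v))
    (hval : ∀ i, IsColourValue j i → i ≠ t → 1 ≤ i ∧ IsColourValue k i)
    (hf₂b : f₂ b = t) (hf₂ : ∀ v, v ≠ b → f v ≠ 0 → f₂ v = f v)
    (hτ₂τ : ∀ u v, f u ≠ 0 → f v ≠ 0 → τ₂ u v = τ u v)
    (hdiag : 1 ≤ t → HasEdge G τ₂ f₂ t t (-1)) : IsCompleteNat G τ₂ f₂ j := by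
  have hx0 : x ≠ 0 := Nat.one_le_iff_ne_zero.1 h.one_le
  have hab : a ≠ b := G.ne_of_adj h.adj
  have hf₂a : f₂ a = x := (hf₂ a hab (h.left ▸ hx0)).trans h.left
  have hfb : f b ≠ 0 := h.right ▸ hx0
  have hagree_f : ∀ v, f v ≠ x → f v ≠ 0 → f₂ v = f v := fun v hvx hv0 =>
    hf₂ v (h.ne_right_of_ne hvx) hv0
  have hnbr : ∀ {v : V} {z : ℕ}, f v ≠ 0 → z ≠ x → 1 ≤ z → ∀ w, G.Adj v w → f w = z →
      f₂ w = z ∧ τ₂ v w = τ v w := fun hv hzx hz w _ hw =>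
    ⟨(hagree_f w (hw ▸ hzx) (by omega)).trans hw, hτ₂τ _ w hv (by omega)⟩
  refine ⟨hcolour, hproper, forall_rel_of_forall_ne₂ (fun _ _ hij => hij.symm hτ₂) (t := t)
    (x := x) ?_ (fun z hz hzt hzx => ?_) (fun z hz hzt hzx => ?_)
    (fun i j hi hj hij _ _ hix hjx => ?_), fun i hi1 hi => ?_⟩
  · rintro s (rfl | rfl)
    · exact ⟨b, a, h.adj.symm, hf₂b, hf₂a, by
        rw [hτ₂τ b a hfb (h.left ▸ hx0), hτ.1, h.sign]⟩
    · exact ⟨b, p, hp, hf₂b, (hf₂ p (G.ne_of_adj hp).symm (hfp ▸ hx0)).trans hfp, by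
        rw [hτ₂τ b p hfb (hfp ▸ hx0)]; exact (h.symm hτ).neg_of_adj hp hfp hpa⟩
  · obtain ⟨hz1, hz⟩ := hval z hz hzt
    exact hf₂b ▸ hb.covered hz1 hz.1 hzx (hnbr hfb hzx hz1)
  · obtain ⟨hz1, hz⟩ := hval z hz hzt
    exact hf₂a ▸ ha.covered hz1 hz.1 hzx (hnbr (h.left ▸ hx0) hzx hz1)
  · obtain ⟨hi1, hi⟩ := hval i hi ‹_›
    obtain ⟨hj1, hj⟩ := hval j hj ‹_›
    exact (h.covered i j hi hj hij).of_agree (P := fun i => i ≠ x ∧ i ≠ 0) ⟨hix, by omega⟩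
      ⟨hjx, by omega⟩ (fun v hv => hagree_f v hv.1 hv.2) fun u v hu hv => hτ₂τ u v hu.2 hv.2
  · by_cases hit : i = t
    · exact hit ▸ hdiag (hit ▸ hi1)
    by_cases hix : i = x
    · refine ⟨a, a₁, ha₁, hix ▸ hf₂a, by rw [hf₂ a₁ ha₁b (hfa₁ ▸ hx0), hfa₁, hix], ?_⟩
      rw [hτ₂τ a a₁ (h.left ▸ hx0) (hfa₁ ▸ hx0)]
      exact h.neg_of_adj ha₁ hfa₁ ha₁b
    · exact (h.diag i hi1 (hval i hi hit).2 hix).of_agree (P := fun i => i ≠ x ∧ i ≠ 0)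
        ⟨hix, by omega⟩ ⟨hix, by omega⟩ (fun v hv => hagree_f v hv.1 hv.2)
        fun u v hu hv => hτ₂τ u v hu.2 hv.2

/-- For even `k` the colour `0` is unused, and `b` takes it. -/
theorem IsDefectiveAt.admitsComplete_add_one_of_even (hτ : IsSignature τ)
    (h : IsDefectiveAt G τ f k x a b) (hk : Even k) {a₁ : V} (ha₁ : G.Adj a a₁)
    (hfa₁ : f a₁ = x) (ha₁b : a₁ ≠ b) {p : V} (hp : G.Adj b p) (hfp : f p = x) (hpa : p ≠ a)
    (ha : SeesBothSigns G τ f k x a) (hb : SeesBothSigns G τ f k x b) :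
    AdmitsComplete G τ (k + 1) := by
  classical
  set f₂ := Function.update f b 0
  have hf₂ : ∀ v, v ≠ b → f₂ v = f v := fun v hv => Function.update_of_ne hv _ _
  have hf₂b : f₂ b = 0 := Function.update_self b 0 f
  have hk2 := Nat.even_iff.1 hk
  refine (h.isCompleteNat_of_recolour hτ ha₁ hfa₁ ha₁b hp hfp hpa ha hb hτ (t := 0)
    (isProperNat_of_recolour hτ.1 (T := {b}) (fun u v huv hu hv => h.proper_of_ne huv hu hv)
      hf₂ (fun _ _ _ _ => rfl) (fun v hv => hv ▸ hf₂b) fun u v huv hu hv => ?_)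
    (fun v => ?_) (fun i hi hi0 => ?_) hf₂b (fun v hv _ => hf₂ v hv) (fun _ _ _ _ => rfl)
    (fun h0 => absurd h0 (by omega))).admitsComplete hτ
  · rw [Set.mem_singleton_iff.1 hu] at huv
    rw [hf₂ v (G.ne_of_adj huv).symm] at hv
    exact absurd hv ((h.colour v).2 hk)
  · have := (h.colour v).1
    rw [isColourValue_iff]
    by_cases hv : v = b
    · rw [hv, hf₂b]; omega
    · rw [hf₂ v hv]; omega
  · rw [isColourValue_iff] at hi ⊢
    omega

theorem IsDefectiveAt.switchAt_zero_eq_neg_one (hτ : IsSignature τ)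
    (h : IsDefectiveAt G τ f k x a b) {w : V} (hw : f w = 0) :
    switchAt {v | f v = 0 ∧ τ b v = 1} τ b w = -1 := by
  have hfb : f b ≠ 0 := h.right ▸ Nat.one_le_iff_ne_zero.1 h.one_le
  rcases hτ.2 b w with h' | h'
  · rw [switchAt_of_not_iff (by simp [hw, h', hfb]), h']
  · rw [switchAt_of_not_mem (fun hS => hfb hS.1) (by simp [h']), h']

open Classical in
theorem IsDefectiveAt.isProperNat_recolour_zero (hτ : IsSignature τ)
    (h : IsDefectiveAt G τ f k x a b) :
    IsProperNat G (switchAt {v | f v = 0 ∧ τ b v = 1} τ)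
      (fun v => if v = b ∨ f v = 0 then k / 2 + 1 else f v) := by
  have hne : ∀ w, f w = 0 → w ≠ b := fun w hw hwb =>
    Nat.one_le_iff_ne_zero.1 h.one_le (h.right ▸ hwb ▸ hw)
  refine isProperNat_of_recolour ((hτ.switchAt _).1) (T := {v | v = b ∨ f v = 0})
    (fun u v huv hu hv => h.proper_of_ne huv (fun e => hu (Or.inl e)) fun e => hv (Or.inl e))
    (fun v hv => if_neg hv)
    (fun u v hu hv => switchAt_of_not_mem (fun hS => hu (Or.inr hS.1)) fun hS => hv (Or.inr hS.1))
    (fun v hv => if_pos hv) fun u v huv hu hv => ⟨?_, by omega⟩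
  have hvT : v = b ∨ f v = 0 := by
    by_contra hvT
    have := (h.colour v).1
    simp only [hvT, if_false] at hv
    omega
  rcases hu with rfl | hu0 <;> rcases hvT with rfl | hv0
  · exact absurd huv G.irrefl
  · exact h.switchAt_zero_eq_neg_one hτ hv0
  · rw [(hτ.switchAt _).1]; exact h.switchAt_zero_eq_neg_one hτ hu0
  · exact absurd hu0 (h.proper_of_ne huv (hne u hu0) (hne v hv0) (hu0.trans hv0.symm)).2

/-- For odd `k`, `b` and colour class `0` form a new top class `k / 2 + 1`; a vertex of class `0`
is switched when its edge to `b` is positive. -/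
theorem IsDefectiveAt.admitsComplete_add_one_of_odd (hτ : IsSignature τ)
    (h : IsDefectiveAt G τ f k x a b) (hk : ¬Even k) {a₁ : V} (ha₁ : G.Adj a a₁)
    (hfa₁ : f a₁ = x) (ha₁b : a₁ ≠ b) {p : V} (hp : G.Adj b p) (hfp : f p = x) (hpa : p ≠ a)
    {w₀ : V} (hw₀ : G.Adj b w₀) (hfw₀ : f w₀ = 0)
    (ha : SeesBothSigns G τ f k x a) (hb : SeesBothSigns G τ f k x b) :
    AdmitsComplete G τ (k + 1) := by
  classical
  set S : Set V := {v | f v = 0 ∧ τ b v = 1}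
  set f₂ : V → ℕ := fun v => if v = b ∨ f v = 0 then k / 2 + 1 else f v
  have hf₂ : ∀ v, v ≠ b → f v ≠ 0 → f₂ v = f v := fun v hvb hv0 => if_neg fun e => e.elim hvb hv0
  have hf₂T : ∀ v, v = b ∨ f v = 0 → f₂ v = k / 2 + 1 := fun v hv => if_pos hv
  have hk2 := Nat.even_iff.not.1 hk
  refine (h.isCompleteNat_of_recolour hτ ha₁ hfa₁ ha₁b hp hfp hpa ha hb (hτ.switchAt S)
    (h.isProperNat_recolour_zero hτ) (fun v => ?_) (fun i hi hit => ?_) (hf₂T b (Or.inl rfl))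
    hf₂ (fun u v hu hv => switchAt_of_not_mem (fun hS => hu hS.1) fun hS => hv hS.1)
    fun _ => ⟨b, w₀, hw₀, hf₂T b (Or.inl rfl), hf₂T w₀ (Or.inr hfw₀),
      h.switchAt_zero_eq_neg_one hτ hfw₀⟩).admitsComplete (hτ.switchAt S)
    |>.of_switchEquiv (switchEquiv_switchAt S τ)
  · show IsColourValue (k + 1) (f₂ v)
    have := (h.colour v).1
    rw [isColourValue_iff]
    by_cases hv : v = b ∨ f v = 0
    · rw [hf₂T v hv]; omega
    · push Not at hv
      rw [hf₂ v hv.1 hv.2]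
      exact ⟨by omega, fun _ => hv.2⟩
  · rw [isColourValue_iff] at hi ⊢
    omega

theorem IsDefectiveAt.exists_admitsComplete (hτ : IsSignature τ)
    (h : IsDefectiveAt G τ f k x a b) : ∃ j, k ≤ j + 2 ∧ AdmitsComplete G τ j := by
  by_cases hba : Relation.ReflTransGen
      (fun u v => (G.deleteEdges {s(a, b)}).Adj u v ∧ f u = x ∧ f v = x) b a
  swap
  · exact h.exists_admitsComplete_of_not_reachable hτ hba
  have hab : a ≠ b := G.ne_of_adj h.adj
  obtain ⟨p, hbp, -, hfp⟩ : ∃ p, (G.deleteEdges {s(a, b)}).Adj b p ∧ f b = x ∧ f p = x := by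
    rcases hba.cases_head with e | ⟨p, hbp, -⟩
    exacts [absurd e.symm hab, ⟨p, hbp⟩]
  obtain ⟨a₁, ha₁, hfa₁, -⟩ : ∃ a₁, (G.deleteEdges {s(a, b)}).Adj a₁ a ∧ f a₁ = x ∧ f a = x := by
    rcases hba.cases_tail with e | ⟨a₁, -, ha₁⟩
    exacts [absurd e hab, ⟨a₁, ha₁⟩]
  obtain ⟨hbp, hpa⟩ := deleteEdges_adj.1 hbp
  obtain ⟨ha₁, ha₁b⟩ := deleteEdges_adj.1 ha₁
  replace hpa : p ≠ a := by rintro rfl; exact hpa Sym2.eq_swap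
  replace ha₁b : a₁ ≠ b := by rintro rfl; exact ha₁b Sym2.eq_swap
  by_cases hb : HasFreeColour G τ f k x b
  · exact h.exists_admitsComplete_of_hasFreeColour hτ ha₁.symm hfa₁ ha₁b hb
  by_cases ha : HasFreeColour G τ f k x a
  · exact (h.symm hτ).exists_admitsComplete_of_hasFreeColour hτ hbp hfp hpa ha
  have ha' := seesBothSigns_of_not_hasFreeColour hτ ha
  have hb' := seesBothSigns_of_not_hasFreeColour hτ hb
  refine ⟨k + 1, by omega, ?_⟩
  by_cases hk : Even k
  · exact h.admitsComplete_add_one_of_even hτ hk ha₁.symm hfa₁ ha₁b hbp hfp hpa ha' hb'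
  · obtain ⟨w₀, hw₀, hfw₀⟩ :=
      exists_adj_zero_of_not_hasFreeColour hk (Nat.one_le_iff_ne_zero.1 h.one_le) hb
    exact h.admitsComplete_add_one_of_odd hτ hk ha₁.symm hfa₁ ha₁b hbp hfp hpa hw₀ hfw₀ ha' hb'

end Defect

section Flip

variable {V : Type*} {G : SimpleGraph V} {τ τ' : V → V → ℤ} {f : V → ℕ} {k : ℕ} {a b : V}

theorem HasEdge.of_flip (hsame : ∀ u v, s(u, v) ≠ s(a, b) → τ' u v = τ u v) {i j : ℕ} {s : ℤ}
    (h : HasEdge G τ f i j s) (hab : ¬(f a = i ∧ f b = j)) (hba : ¬(f b = i ∧ f a = j)) :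
    HasEdge G τ' f i j s := by
  obtain ⟨u, v, huv, rfl, rfl, rfl⟩ := h
  refine ⟨u, v, huv, rfl, rfl, hsame u v fun he => ?_⟩
  rcases Sym2.eq_iff.1 he with ⟨rfl, rfl⟩ | ⟨rfl, rfl⟩
  exacts [hab ⟨rfl, rfl⟩, hba ⟨rfl, rfl⟩]

theorem IsCompleteNat.isDefectiveAt_of_flip (hab : G.Adj a b) (hflip : τ' a b = -τ a b)
    (hsame : ∀ u v, s(u, v) ≠ s(a, b) → τ' u v = τ u v) (hf : IsCompleteNat G τ f k)
    (hxy : f a = f b) : IsDefectiveAt G τ' f k (f a) a b := by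
  obtain ⟨hneg, hx⟩ := hf.proper a b hab hxy
  refine ⟨hab, by rw [hflip, hneg]; rfl, rfl, hxy.symm, Nat.one_le_iff_ne_zero.2 hx, hf.colour,
    fun u v huv he => ?_, fun i j hi hj hij s hs => ?_, fun i hi1 hi hix => ?_⟩
  · obtain ⟨huv, hs⟩ := deleteEdges_adj.1 huv
    rw [hsame u v hs]
    exact hf.proper u v huv he
  · exact (hf.covered i j hi hj hij s hs).of_flip hsame (fun e => hij (e.1 ▸ e.2 ▸ hxy))
      fun e => hij (e.1 ▸ e.2 ▸ hxy.symm)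
  · exact (hf.diag i hi1 hi).of_flip hsame (fun e => hix e.1.symm) fun e => hix e.2.symm

theorem IsCompleteNat.isCompleteAwayFrom_of_flip
    (hsame : ∀ u v, s(u, v) ≠ s(a, b) → τ' u v = τ u v) (hf : IsCompleteNat G τ f k)
    (hxy : f a ≠ f b) : IsCompleteAwayFrom G τ' f k (if f a = 0 then f b else f a) := by
  refine ⟨hf.colour, fun u v huv he => ?_, fun i j hi hj hij hix hjx s hs => ?_,
    fun i hi1 hi => ?_⟩
  · rw [hsame u v fun e => ?_]
    · exact hf.proper u v huv he
    rcases Sym2.eq_iff.1 e with ⟨rfl, rfl⟩ | ⟨rfl, rfl⟩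
    exacts [hxy he, hxy he.symm]
  · refine (hf.covered i j hi hj hij s hs).of_flip hsame ?_ ?_ <;>
      split_ifs at hix hjx <;> omega
  · exact (hf.diag i hi1 hi).of_flip hsame (fun e => hxy (e.1.trans e.2.symm))
      fun e => hxy (e.2.trans e.1.symm)

theorem IsCompleteNat.exists_admitsComplete_of_flip (hτ' : IsSignature τ') (hab : G.Adj a b)
    (hflip : τ' a b = -τ a b) (hsame : ∀ u v, s(u, v) ≠ s(a, b) → τ' u v = τ u v)
    (hf : IsCompleteNat G τ f k) : ∃ j, k ≤ j + 2 ∧ AdmitsComplete G τ' j := by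
  by_cases hxy : f a = f b
  · exact (hf.isDefectiveAt_of_flip hab hflip hsame hxy).exists_admitsComplete hτ'
  · have := (hf.colour a).1
    have := (hf.colour b).1
    refine (hf.isCompleteAwayFrom_of_flip hsame hxy).exists_admitsComplete hτ' ?_ ?_ <;>
      split_ifs <;> omega

theorem psi_le_psi_add_two [Fintype V] {σ σ' : V → V → ℤ} (hσ' : IsSignature σ')
    (hab : G.Adj a b) (hflip : σ' a b = -σ a b)
    (hsame : ∀ u v, s(u, v) ≠ s(a, b) → σ' u v = σ u v) : psi G σ ≤ psi G σ' + 2 := by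
  refine csSup_le' fun k hk => ?_
  obtain ⟨τ, -, hστ, f, hf⟩ := AdmitsComplete.exists_isCompleteNat hk
  obtain ⟨τ', hτ', hσ'τ', hflip', hsame'⟩ := hστ.exists_flip hσ' hflip hsame
  obtain ⟨j, hkj, hj⟩ := hf.exists_admitsComplete_of_flip hτ' hab hflip' hsame'
  have : j ≤ psi G σ' := le_csSup ⟨_, fun _ => AdmitsComplete.le_two_mul_card_add_one⟩
    (hj.of_switchEquiv hσ'τ')
  omega

end Flip

/-- If `(G,σ')` is obtained from `(G,σ)` by changing the sign of a single
edge, then `ψ(G,σ) − 2 ≤ ψ(G,σ') ≤ ψ(G,σ) + 2`. -/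
theorem statement10 {V : Type*} [Fintype V] (G : SimpleGraph V) (σ σ' : V → V → ℤ)
    (hσ : IsSignature σ) (hσ' : IsSignature σ') (a b : V) (hab : G.Adj a b)
    (hflip : σ' a b = -σ a b)
    (hsame : ∀ u v, ¬((u = a ∧ v = b) ∨ (u = b ∧ v = a)) → σ' u v = σ u v) :
    psi G σ - 2 ≤ psi G σ' ∧ psi G σ' ≤ psi G σ + 2 := by
  have hsame' : ∀ u v, s(u, v) ≠ s(a, b) → σ' u v = σ u v := fun u v huv =>
    hsame u v (Sym2.eq_iff.not.1 huv)
  have h₁ := psi_le_psi_add_two hσ' hab hflip hsame'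
  have h₂ := psi_le_psi_add_two hσ hab (by rw [hflip, neg_neg]) fun u v huv =>
    (hsame' u v huv).symm
  omega
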